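/- Consider the network whose interference graph G is the 6-cycle on links K = {a, b, c, d, e, f}, and for a parameter p ∈ (0,1) the i.i.d. fading structure π_p(J) = p^{|J|}·(1−p)^{6−|J|} for J ⊆ K. Then there exists p_0 ∈ (0,1) such that for all p ∈ (0, p_0), σ*_G(π_p) > 2/3. (Since the non-fading local pooling factor of the 6-cycle equals 2/3, fading improves the relative performance of greedy maximal scheduling for this network when p is small.) -/

import Mathlib

open scoped BigOperators
open Filter MeasureTheory ProbabilityTheory

/-- `S` is an independent set of the interference graph `G` contained in the
set of links `J` (pairwise non-adjacent links). -/
def IsIndepIn {V : Type*} (G : SimpleGraph V) (J S : Finset V) : Prop :=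
  S ⊆ J ∧ ∀ u ∈ S, ∀ v ∈ S, ¬ G.Adj u v

/-- `S` is a maximal independent set of `J`. -/
def IsMaxIndepIn {V : Type*} (G : SimpleGraph V) (J S : Finset V) : Prop :=
  IsIndepIn G J S ∧ ∀ T, IsIndepIn G J T → S ⊆ T → S = T

/-- 0/1 indicator vector of a finite set of links. -/
def indVec {V : Type*} [DecidableEq V] (S : Finset V) : V → ℝ :=
  fun v => if v ∈ S then 1 else 0

/-- `M_{J,L}` : the (finite) set of 0/1 indicator vectors of the maximal independent
sets of `J`; the vectors are encoded in the ambient space `ℝ^V`, coordinates outside `J`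
are automatically `0`. -/
def Mset {V : Type*} [DecidableEq V] (G : SimpleGraph V) (J : Finset V) : Set (V → ℝ) :=
  indVec '' {S | IsMaxIndepIn G J S}

/-- `CH(M_{J,L})` : the convex hull of `M_{J,L}`. -/
noncomputable def CHM {V : Type*} [DecidableEq V] (G : SimpleGraph V) (J : Finset V) :
    Set (V → ℝ) :=
  convexHull ℝ (Mset G J)

/-- A fading structure `π` on the set of links: nonnegative weights summing to one. -/
def IsFading {V : Type*} [Fintype V] [DecidableEq V] (π : Finset V → ℝ) : Prop :=
  (∀ J, 0 ≤ π J) ∧ ∑ J : Finset V, π J = 1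

/-- `Φ(L) = { Σ_{J ⊆ K} π(J) η_J : η_J ∈ CH(M_{J∩L,L}) }`. -/
def Phi {V : Type*} [Fintype V] [DecidableEq V] (G : SimpleGraph V) (π : Finset V → ℝ)
    (L : Finset V) : Set (V → ℝ) :=
  {φ | ∃ η : Finset V → V → ℝ, (∀ J, η J ∈ CHM G (J ∩ L)) ∧
    φ = ∑ J : Finset V, π J • η J}

/-- The fading local pooling factor `σ*_L(π)` of a set of links `L`. -/
noncomputable def sigmaL {V : Type*} [Fintype V] [DecidableEq V] (G : SimpleGraph V)
    (π : Finset V → ℝ) (L : Finset V) : ℝ :=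
  sInf {σ : ℝ | 0 ≤ σ ∧ ∃ φ1 ∈ Phi G π L, ∃ φ2 ∈ Phi G π L, ∀ v ∈ L, φ2 v ≤ σ * φ1 v}

/-- The Fading-LPF `σ*_G(π)` of the network: minimum of `σ*_L(π)` over nonempty `L ⊆ K`. -/
noncomputable def sigmaG {V : Type*} [Fintype V] [DecidableEq V] (G : SimpleGraph V)
    (π : Finset V → ℝ) : ℝ :=
  sInf (sigmaL G π '' {L : Finset V | L.Nonempty})
/-- The marginal distribution `π_L` induced on a subset of links `L`. -/
noncomputable def marginal {V : Type*} [Fintype V] [DecidableEq V] (π : Finset V → ℝ)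
    (L J : Finset V) : ℝ :=
  ∑ I : Finset V, if I ∩ L = J then π I else 0

/-- `n(M_J)`: minimum cardinality of a maximal independent set of `J`. -/
noncomputable def nM {V : Type*} (G : SimpleGraph V) (J : Finset V) : ℕ :=
  sInf (Finset.card '' {S | IsMaxIndepIn G J S})

/-- `N(M_J)`: maximum cardinality of a maximal independent set of `J`. -/
noncomputable def NM {V : Type*} (G : SimpleGraph V) (J : Finset V) : ℕ :=
  sSup (Finset.card '' {S | IsMaxIndepIn G J S})

/-- interference degree of a link `l`: maximum cardinality of an independent set of `G`
contained in the closed neighborhood of `l`. -/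
noncomputable def dI {V : Type*} (G : SimpleGraph V) (l : V) : ℕ :=
  sSup (Finset.card '' {S : Finset V | (∀ u ∈ S, ∀ v ∈ S, ¬ G.Adj u v) ∧
    ∀ v ∈ S, v = l ∨ G.Adj l v})

/-- interference degree `d_I(G)` of the whole interference graph. -/
noncomputable def dIG {V : Type*} (G : SimpleGraph V) : ℕ :=
  sSup (Set.range (dI G))

/-- interference degree `d_I(S)` of the subgraph of `G` induced on the set of links `S`. -/
noncomputable def dISet {V : Type*} (G : SimpleGraph V) (Sset : Finset V) : ℕ :=
  sSup (Finset.card '' {T : Finset V | T ⊆ Sset ∧ (∀ u ∈ T, ∀ v ∈ T, ¬ G.Adj u v) ∧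
    ∃ l ∈ Sset, ∀ v ∈ T, v = l ∨ G.Adj l v})

/-- The throughput region `Λ_f`. -/
def LambdaF {V : Type*} [Fintype V] [DecidableEq V] (G : SimpleGraph V) (π : Finset V → ℝ) :
    Set (V → ℝ) :=
  {lam | (∀ v, 0 < lam v) ∧ ∃ η : Finset V → V → ℝ,
    (∀ J, η J ∈ CHM G J) ∧ ∀ v, lam v ≤ ∑ J : Finset V, π J * η J v}

/-- The scaled region `Λ_f(x)`. -/
def LambdaX {V : Type*} [Fintype V] [DecidableEq V] (G : SimpleGraph V) (π : Finset V → ℝ)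
    (x : Finset V → ℝ) : Set (V → ℝ) :=
  {lam | (∀ v, 0 < lam v) ∧ ∃ η : Finset V → V → ℝ,
    (∀ J, η J ∈ CHM G J) ∧ ∀ v, lam v ≤ ∑ J : Finset V, x J * π J * η J v}

/-- The standard (non-fading) local pooling factor of a graph `H`. -/
noncomputable def stdLPF (W : Type*) [Fintype W] [DecidableEq W] (H : SimpleGraph W) : ℝ :=
  sInf ((fun L => sInf {σ : ℝ | 0 ≤ σ ∧ ∃ φ1 ∈ CHM H L, ∃ φ2 ∈ CHM H L,
    ∀ v ∈ L, φ2 v ≤ σ * φ1 v}) '' {L : Finset W | L.Nonempty})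

/-- discrete measurable structure on global channel states -/
instance {α : Type*} : MeasurableSpace (Finset α) := ⊤

/-- The queue-length process `Q` evolves according to
`Q_l[t+1] = (Q_l[t] − C_l[t]·1{l ∈ S[t]})⁺ + A_l[t]`, `Q_l[0] = 0`,
where `GS t ω` is the set of 'ON' links and `S t ω` is the schedule. -/
def QueueEvol {V : Type*} [DecidableEq V] {Ω : Type*} (A : ℕ → V → Ω → ℕ)
    (GS S : ℕ → Ω → Finset V) (Q : ℕ → V → Ω → ℕ) : Prop :=
  (∀ l ω, Q 0 l ω = 0) ∧
  ∀ t l ω, Q (t + 1) l ω =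
    (Q t l ω - (if l ∈ GS t ω ∧ l ∈ S t ω then 1 else 0)) + A t l ω

/-- `S` is a greedy maximal schedule for the weights `w`: a maximal independent set of `G`
with an enumeration `s_0, …, s_{k-1}` such that each `s_i` has maximal weight among the
links neither equal nor adjacent to any of `s_0, …, s_{i-1}`. -/
def IsGreedySchedule {V : Type*} [Fintype V] [DecidableEq V] (G : SimpleGraph V)
    (w : V → ℝ) (S : Finset V) : Prop :=
  IsMaxIndepIn G Finset.univ S ∧
  ∃ s : ℕ → V, S = (Finset.range S.card).image s ∧
    (∀ i < S.card, ∀ j < S.card, s i = s j → i = j) ∧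
    ∀ i < S.card, ∀ v : V, (∀ j < i, v ≠ s j ∧ ¬ G.Adj v (s j)) → w v ≤ w (s i)

/-- A GMS policy: at every time and in every sample point, the schedule is a greedy
maximal schedule for the weights `w_l = Q_l[t]·C_l[t]`. -/
def IsGMSPolicy {V : Type*} [Fintype V] [DecidableEq V] {Ω : Type*} (G : SimpleGraph V)
    (GS S : ℕ → Ω → Finset V) (Q : ℕ → V → Ω → ℕ) : Prop :=
  ∀ t ω, IsGreedySchedule G
    (fun l => (Q t l ω : ℝ) * (if l ∈ GS t ω then 1 else 0)) (S t ω)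

/-- The 6-cycle interference graph on the links `{a,b,c,d,e,f} = Fin 6`. -/
def C6 : SimpleGraph (Fin 6) := SimpleGraph.fromRel (fun u v => v = u + 1)

/-- The i.i.d. fading structure `π_p(J) = p^{|J|} (1-p)^{6-|J|}`. -/
noncomputable def piHex (p : ℝ) : Finset (Fin 6) → ℝ := fun J =>
  p ^ J.card * (1 - p) ^ (6 - J.card)

/-!
Sum a pooled service vector `φ = Σ_J π(J) η_J ∈ Φ(L)` over the links of `L`. For each channel
state `J`, the total of `η_J ∈ CH(M_{J∩L,L})` lies between the sizes of the smallest and the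
largest maximal independent set of `J ∩ L`, and when `|J ∩ L| ≤ 2` these sizes coincide. So two
pooled vectors `φ₁, φ₂` can differ in total only through states with at least three ON links,
of probability `O(p³)`, while each singleton state `{v₀} ⊆ L` alone gives `φ₂` a total of at
least `p(1-p)⁵`. Hence `3 Σ φ₂ - 2 Σ φ₁ ≥ p(1-p)⁵ - O(p³) > 0` for small `p`, and since
`Σ φ₁ ≤ 6`, every `σ` with `φ₂ ≤ σ φ₁` on `L` exceeds `2/3` by a margin independent of `L`.
-/

section Pooling

variable {V : Type*}

lemma IsMaxIndepIn.nonempty {G : SimpleGraph V} {I S : Finset V} (hS : IsMaxIndepIn G I S)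
    (hI : I.Nonempty) : S.Nonempty := by
  obtain ⟨v, hv⟩ := hI
  rw [Finset.nonempty_iff_ne_empty]
  rintro rfl
  have hv' : IsIndepIn G I {v} := ⟨by simpa using hv, by simp⟩
  exact Finset.singleton_ne_empty v (hS.2 {v} hv' (Finset.empty_subset _)).symm

lemma IsMaxIndepIn.eq_of_isIndepIn_self {G : SimpleGraph V} {I S : Finset V}
    (hS : IsMaxIndepIn G I S) (hI : IsIndepIn G I I) : S = I :=
  hS.2 I hI hS.1.1

lemma isMaxIndepIn_singleton (G : SimpleGraph V) (v : V) : IsMaxIndepIn G {v} {v} :=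
  ⟨⟨subset_rfl, by simp⟩, fun _ hT hvT => Finset.Subset.antisymm hvT hT.1⟩

lemma exists_isMaxIndepIn (G : SimpleGraph V) (J : Finset V) : ∃ S, IsMaxIndepIn G J S := by
  obtain ⟨S, hS, hmax⟩ := Set.Finite.exists_maximalFor id {S : Finset V | IsIndepIn G J S}
    (J.powerset.finite_toSet.subset fun S hS => Finset.mem_powerset.2 hS.1)
    ⟨∅, Finset.empty_subset J, by simp⟩
  exact ⟨S, hS, fun T hT hST => Finset.Subset.antisymm hST (hmax hT hST)⟩

lemma IsMaxIndepIn.card_eq_of_card_le_two {G : SimpleGraph V} {I S S' : Finset V}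
    (hI : I.card ≤ 2) (hS : IsMaxIndepIn G I S) (hS' : IsMaxIndepIn G I S') :
    S.card = S'.card := by
  rcases eq_or_ne S I with rfl | hSI
  · exact congrArg _ (hS'.eq_of_isIndepIn_self hS.1).symm
  rcases eq_or_ne S' I with rfl | hS'I
  · exact congrArg _ (hS.eq_of_isIndepIn_self hS'.1)
  have hlt := Finset.card_lt_card (Finset.ssubset_iff_subset_ne.2 ⟨hS.1.1, hSI⟩)
  have hlt' := Finset.card_lt_card (Finset.ssubset_iff_subset_ne.2 ⟨hS'.1.1, hS'I⟩)
  rcases I.eq_empty_or_nonempty with rfl | hne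
  · simp [Finset.subset_empty.1 hS.1.1, Finset.subset_empty.1 hS'.1.1]
  · have := (hS.nonempty hne).card_pos
    have := (hS'.nonempty hne).card_pos
    omega

lemma sum_indVec_of_subset [DecidableEq V] {S L : Finset V} (hSL : S ⊆ L) :
    ∑ v ∈ L, indVec S v = S.card := by
  rw [← Finset.sum_subset hSL fun v _ hv => by simp [indVec, hv]]
  simp [indVec]

lemma sum_mem_Icc_of_mem_CHM [DecidableEq V] {G : SimpleGraph V} {I L : Finset V} (hIL : I ⊆ L)
    {a b : ℝ} (hab : ∀ S, IsMaxIndepIn G I S → (S.card : ℝ) ∈ Set.Icc a b)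
    {η : V → ℝ} (hη : η ∈ CHM G I) : ∑ v ∈ L, η v ∈ Set.Icc a b := by
  have hlin : IsLinearMap ℝ fun x : V → ℝ => ∑ v ∈ L, x v :=
    ⟨fun x y => by simp [Finset.sum_add_distrib], fun c x => by simp [Finset.mul_sum]⟩
  refine convexHull_min ?_ ((convex_Icc a b).is_linear_preimage hlin) hη
  rintro _ ⟨S, hS, rfl⟩
  simpa [sum_indVec_of_subset (hS.1.1.trans hIL)] using hab S hS

lemma sum_eq_of_mem_CHM [DecidableEq V] {G : SimpleGraph V} {I L : Finset V} (hIL : I ⊆ L)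
    {m : ℕ} (hcard : ∀ S, IsMaxIndepIn G I S → S.card = m)
    {η : V → ℝ} (hη : η ∈ CHM G I) : ∑ v ∈ L, η v = m := by
  have h := sum_mem_Icc_of_mem_CHM hIL (a := m) (b := m) (fun S hS => by simp [hcard S hS]) hη
  exact le_antisymm h.2 h.1

lemma sum_mem_Icc_card_of_mem_CHM [DecidableEq V] {G : SimpleGraph V} {I L : Finset V}
    (hIL : I ⊆ L) {η : V → ℝ} (hη : η ∈ CHM G I) : ∑ v ∈ L, η v ∈ Set.Icc 0 (L.card : ℝ) :=
  sum_mem_Icc_of_mem_CHM hIL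
    (fun _ hS => ⟨Nat.cast_nonneg _, Nat.cast_le.2 (Finset.card_le_card (hS.1.1.trans hIL))⟩) hη

lemma sum_apply_sum_smul {ι : Type*} [Fintype ι] (π : ι → ℝ) (η : ι → V → ℝ) (L : Finset V) :
    ∑ v ∈ L, (∑ J, π J • η J) v = ∑ J, π J * ∑ v ∈ L, η J v := by
  simp only [Finset.sum_apply, Pi.smul_apply, smul_eq_mul, Finset.mul_sum]
  exact Finset.sum_comm

variable [Fintype V] [DecidableEq V] {G : SimpleGraph V} {π : Finset V → ℝ} {L : Finset V}

lemma Phi_nonempty : (Phi G π L).Nonempty := by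
  choose S hS using fun J => exists_isMaxIndepIn G (J ∩ L)
  exact ⟨_, fun J => indVec (S J), fun J => subset_convexHull ℝ _ ⟨S J, hS J, rfl⟩, rfl⟩

lemma sum_mem_Icc_of_mem_Phi (hπ : IsFading π) {φ : V → ℝ} (hφ : φ ∈ Phi G π L) :
    ∑ v ∈ L, φ v ∈ Set.Icc 0 (L.card : ℝ) := by
  obtain ⟨η, hη, rfl⟩ := hφ
  have hw J := sum_mem_Icc_card_of_mem_CHM (L := L) Finset.inter_subset_right (hη J)
  rw [sum_apply_sum_smul]
  refine ⟨Finset.sum_nonneg fun J _ => mul_nonneg (hπ.1 J) (hw J).1, ?_⟩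
  calc ∑ J, π J * ∑ v ∈ L, η J v ≤ ∑ J, π J * L.card :=
        Finset.sum_le_sum fun J _ => mul_le_mul_of_nonneg_left (hw J).2 (hπ.1 J)
    _ = L.card := by rw [← Finset.sum_mul, hπ.2, one_mul]

lemma le_sum_of_mem_Phi (hπ : ∀ J, 0 ≤ π J) {v₀ : V} (hv₀ : v₀ ∈ L) {φ : V → ℝ}
    (hφ : φ ∈ Phi G π L) : π {v₀} ≤ ∑ v ∈ L, φ v := by
  obtain ⟨η, hη, rfl⟩ := hφ
  have hw J := sum_mem_Icc_card_of_mem_CHM (L := L) Finset.inter_subset_right (hη J)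
  have hv₀L : {v₀} ∩ L = {v₀} := Finset.inter_eq_left.2 (Finset.singleton_subset_iff.2 hv₀)
  have hone : ∑ v ∈ L, η {v₀} v = 1 := by
    have := hη {v₀}
    rw [hv₀L] at this
    exact_mod_cast sum_eq_of_mem_CHM (Finset.singleton_subset_iff.2 hv₀)
      (fun S hS => (hS.card_eq_of_card_le_two (by simp) (isMaxIndepIn_singleton G v₀)).trans
        (Finset.card_singleton v₀)) this
  rw [sum_apply_sum_smul]
  calc π {v₀} = π {v₀} * ∑ v ∈ L, η {v₀} v := by rw [hone, mul_one]
    _ ≤ ∑ J, π J * ∑ v ∈ L, η J v :=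
      Finset.single_le_sum (f := fun J => π J * ∑ v ∈ L, η J v)
        (fun J _ => mul_nonneg (hπ J) (hw J).1) (Finset.mem_univ _)

lemma sum_sub_sum_le_of_mem_Phi (hπ : ∀ J, 0 ≤ π J) {φ₁ φ₂ : V → ℝ} (hφ₁ : φ₁ ∈ Phi G π L)
    (hφ₂ : φ₂ ∈ Phi G π L) :
    ∑ v ∈ L, φ₁ v - ∑ v ∈ L, φ₂ v ≤
      L.card * ∑ J ∈ Finset.univ.filter (fun J : Finset V => 3 ≤ J.card), π J := by
  obtain ⟨η₁, hη₁, rfl⟩ := hφ₁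
  obtain ⟨η₂, hη₂, rfl⟩ := hφ₂
  rw [sum_apply_sum_smul, sum_apply_sum_smul, ← Finset.sum_sub_distrib, Finset.mul_sum,
    Finset.sum_filter]
  refine Finset.sum_le_sum fun J _ => ?_
  have hw₁ := sum_mem_Icc_card_of_mem_CHM (L := L) Finset.inter_subset_right (hη₁ J)
  have hw₂ := sum_mem_Icc_card_of_mem_CHM (L := L) Finset.inter_subset_right (hη₂ J)
  split_ifs with hJ
  · rw [← mul_sub, mul_comm]
    exact mul_le_mul_of_nonneg_right (by linarith [hw₁.2, hw₂.1]) (hπ J)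
  · have hsmall : (J ∩ L).card ≤ 2 :=
      (Finset.card_le_card Finset.inter_subset_left).trans (by omega)
    obtain ⟨S, hS⟩ := exists_isMaxIndepIn G (J ∩ L)
    have hcard S' (hS' : IsMaxIndepIn G (J ∩ L) S') := hS'.card_eq_of_card_le_two hsmall hS
    rw [sum_eq_of_mem_CHM Finset.inter_subset_right hcard (hη₁ J),
      sum_eq_of_mem_CHM Finset.inter_subset_right hcard (hη₂ J), sub_self]

lemma le_sigmaL_of_sum_gap {c δ B : ℝ} (hδ : 0 < δ) (hB : 0 < B)
    (hbound : ∀ φ ∈ Phi G π L, ∑ v ∈ L, φ v ∈ Set.Icc 0 B)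
    (hgap : ∀ φ₁ ∈ Phi G π L, ∀ φ₂ ∈ Phi G π L, c * ∑ v ∈ L, φ₁ v + δ ≤ ∑ v ∈ L, φ₂ v) :
    c + δ / B ≤ sigmaL G π L := by
  obtain ⟨φ, hφ⟩ := Phi_nonempty (G := G) (π := π) (L := L)
  refine le_csInf ⟨1, zero_le_one, φ, hφ, φ, hφ, fun v _ => (one_mul _).ge⟩ ?_
  rintro σ ⟨-, φ₁, hφ₁, φ₂, hφ₂, hle⟩
  obtain ⟨hT₁, hT₁B⟩ := hbound φ₁ hφ₁
  have hσ : ∑ v ∈ L, φ₂ v ≤ σ * ∑ v ∈ L, φ₁ v := by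
    rw [Finset.mul_sum]
    exact Finset.sum_le_sum hle
  have hgap' := hgap φ₁ hφ₁ φ₂ hφ₂
  have hpos : 0 < (σ - c) * ∑ v ∈ L, φ₁ v := by nlinarith
  have hσc : 0 < σ - c := pos_of_mul_pos_left hpos hT₁
  have : δ / B ≤ σ - c := by
    rw [div_le_iff₀ hB]
    nlinarith
  linarith

lemma le_sigmaG [Nonempty V] {r : ℝ} (h : ∀ L : Finset V, L.Nonempty → r ≤ sigmaL G π L) :
    r ≤ sigmaG G π :=
  le_csInf ⟨_, Finset.univ, Finset.univ_nonempty, rfl⟩ fun _ ⟨L, hL, hrL⟩ => hrL ▸ h L hL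

end Pooling

section HexFading

variable {p : ℝ}

lemma isFading_piHex (hp₀ : 0 ≤ p) (hp₁ : p ≤ 1) : IsFading (piHex p) :=
  ⟨fun _ => mul_nonneg (pow_nonneg hp₀ _) (pow_nonneg (sub_nonneg.2 hp₁) _), by
    simpa [piHex] using Fin.sum_pow_mul_eq_add_pow (n := 6) p (1 - p)⟩

lemma piHex_singleton (v : Fin 6) : piHex p {v} = p * (1 - p) ^ 5 := by
  simp [piHex]

lemma sum_piHex_filter_three_le_card_le (hp₀ : 0 ≤ p) (hp₁ : p ≤ 1) :
    ∑ J ∈ Finset.univ.filter (fun J : Finset (Fin 6) => 3 ≤ J.card), piHex p J ≤ 64 * p ^ 3 := by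
  have hterm J (hJ : J ∈ Finset.univ.filter (fun J : Finset (Fin 6) => 3 ≤ J.card)) :
      piHex p J ≤ p ^ 3 :=
    calc piHex p J ≤ p ^ J.card * 1 :=
          mul_le_mul_of_nonneg_left (pow_le_one₀ (by linarith) (by linarith)) (pow_nonneg hp₀ _)
      _ ≤ p ^ 3 := by
          rw [mul_one]
          exact pow_le_pow_of_le_one hp₀ hp₁ (Finset.mem_filter.1 hJ).2
  have hcard : (Finset.univ.filter (fun J : Finset (Fin 6) => 3 ≤ J.card)).card ≤ 64 :=
    (Finset.card_filter_le _ _).trans (by simp)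
  calc _ ≤ ∑ _J ∈ Finset.univ.filter (fun J : Finset (Fin 6) => 3 ≤ J.card), p ^ 3 :=
        Finset.sum_le_sum hterm
    _ ≤ 64 * p ^ 3 := by
        rw [Finset.sum_const, nsmul_eq_mul]
        exact mul_le_mul_of_nonneg_right (by exact_mod_cast hcard) (pow_nonneg hp₀ 3)

/-- `768 = 2 · 6 · 64`: totals over `L` are at most `6`, and each of the at most `64` states
with three or more links has probability at most `p³`. -/
lemma le_sigmaL_piHex (G : SimpleGraph (Fin 6)) (hp₀ : 0 ≤ p) (hp₁ : p ≤ 1)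
    (hgap : 0 < p * (1 - p) ^ 5 - 768 * p ^ 3) {L : Finset (Fin 6)} (hL : L.Nonempty) :
    2 / 3 + (p * (1 - p) ^ 5 - 768 * p ^ 3) / 18 ≤ sigmaL G (piHex p) L := by
  have hπ := isFading_piHex hp₀ hp₁
  have hL6 : (L.card : ℝ) ≤ 6 := by exact_mod_cast (Finset.card_le_univ L).trans (by simp)
  obtain ⟨v₀, hv₀⟩ := hL
  have hbound φ (hφ : φ ∈ Phi G (piHex p) L) : ∑ v ∈ L, φ v ∈ Set.Icc 0 6 :=
    ⟨(sum_mem_Icc_of_mem_Phi hπ hφ).1, (sum_mem_Icc_of_mem_Phi hπ hφ).2.trans hL6⟩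
  have hsplit φ₁ (hφ₁ : φ₁ ∈ Phi G (piHex p) L) φ₂ (hφ₂ : φ₂ ∈ Phi G (piHex p) L) :
      2 / 3 * ∑ v ∈ L, φ₁ v + (p * (1 - p) ^ 5 - 768 * p ^ 3) / 3 ≤ ∑ v ∈ L, φ₂ v := by
    have hsingle := le_sum_of_mem_Phi hπ.1 hv₀ hφ₂
    have hdiff := sum_sub_sum_le_of_mem_Phi hπ.1 hφ₁ hφ₂
    have hcost := mul_le_mul hL6 (sum_piHex_filter_three_le_card_le hp₀ hp₁)
      (Finset.sum_nonneg fun J _ => hπ.1 J) (by norm_num)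
    rw [piHex_singleton] at hsingle
    linarith
  have := le_sigmaL_of_sum_gap (by linarith) (by norm_num) hbound hsplit
  linarith

lemma piHex_gap_pos (hp₀ : 0 < p) (hp : p < 1 / 100) : 0 < p * (1 - p) ^ 5 - 768 * p ^ 3 := by
  have hbernoulli : 1 + 5 * (-p) ≤ (1 + -p) ^ 5 := one_add_mul_le_pow (by linarith) 5
  have : 0 < 1 - 5 * p - 768 * p ^ 2 := by nlinarith
  nlinarith

end HexFading

/-- **Example A.** For the 6-cycle with i.i.d. fading, there is a `p₀ ∈ (0,1)` such that
for all `p ∈ (0, p₀)` the Fading-LPF exceeds `2/3`, the non-fading local pooling factor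
of the 6-cycle: fading improves the relative performance of GMS. -/
theorem example_A_fading_helps :
    ∃ p0 : ℝ, 0 < p0 ∧ p0 < 1 ∧
      ∀ p : ℝ, 0 < p → p < p0 → 2 / 3 < sigmaG C6 (piHex p) := by
  refine ⟨1 / 100, by norm_num, by norm_num, fun p hp hp' => ?_⟩
  have hgap := piHex_gap_pos hp hp'
  have := le_sigmaG fun L hL => le_sigmaL_piHex C6 hp.le (by linarith) hgap hL
  linarith
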